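/- Define Ω̃(μ) as the multiplicative convolution e⁻¹ ⊛ μ, where e is the exponential distribution and e⁻¹ its pushforward under x ↦ 1/x. Then Ω̃(μ)([0,t]) = ∫_{(0,∞)} e^{-x/t} dμ(x) = exp(C_μ(-1/t)) for t > 0, and Ω̃ is a homomorphism from (P(ℝ₊), ∗) to (P(ℝ₊), ∨): Ω̃(μ∗ν)([0,t]) = Ω̃(μ)([0,t])·Ω̃(ν)([0,t]) for all t ≥ 0. -/

import Mathlib

open MeasureTheory Set Filter Real

/-- The exponential distribution with density `e^{-x}` on `(0,∞)`. -/
noncomputable def expDist : Measure ℝ :=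
  (volume.restrict (Set.Ioi 0)).withDensity fun x => ENNReal.ofReal (Real.exp (-x))

/-- Multiplicative convolution: the law of a product of independent random variables. -/
noncomputable def multConv (μ ν : Measure ℝ) : Measure ℝ :=
  Measure.map (fun p : ℝ × ℝ => p.1 * p.2) (μ.prod ν)

/-- Additive convolution. -/
noncomputable def addConv (μ ν : Measure ℝ) : Measure ℝ :=
  Measure.map (fun p : ℝ × ℝ => p.1 + p.2) (μ.prod ν)

/-- `Ω̃(μ) := e⁻¹ ⊛ μ`, the multiplicative convolution of the reciprocal of the
exponential distribution with `μ`. -/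
noncomputable def omegaTilde (μ : Measure ℝ) : Measure ℝ :=
  multConv (Measure.map (fun x : ℝ => x⁻¹) expDist) μ

/-!
If `Y ∼ e` is independent of `X ≥ 0`, then `P(X / Y ≤ t) = E[P(Y ≥ X / t | X)] = E[e^{-X/t}]`
for `t > 0`: the distribution function of `Ω̃(μ)` is the Laplace transform of `μ` at `1/t`.
Since the Laplace transform turns additive convolution into a product, so does `Ω̃`
on distribution functions, for `t > 0`; the case `t = 0` follows by right continuity.
-/

section Exponential

lemma expDist_apply {A : Set ℝ} (hA : MeasurableSet A) :
    expDist A = ∫⁻ x in A ∩ Ioi 0, ENNReal.ofReal (exp (-x)) := by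
  rw [expDist, withDensity_apply _ hA, Measure.restrict_restrict hA]

lemma lintegral_exp_neg_Ici (a : ℝ) :
    ∫⁻ x in Ici a, ENNReal.ofReal (exp (-x)) = ENNReal.ofReal (exp (-a)) := by
  have hint : IntegrableOn (fun x : ℝ => exp (-x)) (Ici a) := by
    rw [integrableOn_Ici_iff_integrableOn_Ioi]
    simpa using exp_neg_integrableOn_Ioi a one_pos
  rw [← ofReal_integral_eq_lintegral_ofReal hint (.of_forall fun x => (exp_pos _).le),
    integral_Ici_eq_integral_Ioi, integral_exp_neg_Ioi]

instance : IsProbabilityMeasure expDist := by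
  constructor
  rw [expDist_apply MeasurableSet.univ, univ_inter, restrict_Ioi_eq_restrict_Ici,
    lintegral_exp_neg_Ici, neg_zero, exp_zero, ENNReal.ofReal_one]

instance : IsProbabilityMeasure (Measure.map (fun x : ℝ => x⁻¹) expDist) :=
  Measure.isProbabilityMeasure_map measurable_inv.aemeasurable

lemma map_inv_expDist_Iic {s : ℝ} (hs : 0 < s) :
    Measure.map (fun x : ℝ => x⁻¹) expDist (Iic s) = ENNReal.ofReal (exp (-s⁻¹)) := by
  have hset : (fun x : ℝ => x⁻¹) ⁻¹' Iic s ∩ Ioi 0 = Ici s⁻¹ := by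
    ext x
    simp only [mem_inter_iff, mem_preimage, mem_Iic, mem_Ioi, mem_Ici]
    constructor
    · rintro ⟨hxs, hx⟩
      exact (inv_le_comm₀ hx hs).mp hxs
    · intro hsx
      have hx : 0 < x := (inv_pos.mpr hs).trans_le hsx
      exact ⟨(inv_le_comm₀ hx hs).mpr hsx, hx⟩
  rw [Measure.map_apply measurable_inv measurableSet_Iic,
    expDist_apply (measurable_inv measurableSet_Iic), hset, lintegral_exp_neg_Ici]

lemma map_inv_expDist_mul_le {t x : ℝ} (ht : 0 < t) (hx : 0 ≤ x) :
    Measure.map (fun x : ℝ => x⁻¹) expDist {y | y * x ≤ t} = ENNReal.ofReal (exp (-x / t)) := by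
  rcases hx.eq_or_lt with rfl | hx
  · simp [ht.le]
  · have hset : {y : ℝ | y * x ≤ t} = Iic (t / x) := by
      ext y; simp [le_div_iff₀ hx]
    rw [hset, map_inv_expDist_Iic (div_pos ht hx), inv_div, neg_div]

end Exponential

section Convolution

variable {μ ν : Measure ℝ}

instance [IsProbabilityMeasure μ] [IsProbabilityMeasure ν] :
    IsProbabilityMeasure (multConv μ ν) :=
  Measure.isProbabilityMeasure_map measurable_mul.aemeasurable

instance [IsProbabilityMeasure μ] [IsProbabilityMeasure ν] :
    IsProbabilityMeasure (addConv μ ν) :=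
  Measure.isProbabilityMeasure_map measurable_add.aemeasurable

instance [IsProbabilityMeasure μ] : IsProbabilityMeasure (omegaTilde μ) := by
  unfold omegaTilde; infer_instance

lemma ae_nonneg_of_measure_Iio_eq_zero (hμ : μ (Iio 0) = 0) : ∀ᵐ x ∂μ, 0 ≤ x :=
  measure_eq_zero_iff_ae_notMem.mp hμ |>.mono fun _ hx => not_lt.mp hx

lemma ae_nonneg_addConv [SFinite μ] [SFinite ν] (hμ : ∀ᵐ x ∂μ, 0 ≤ x) (hν : ∀ᵐ x ∂ν, 0 ≤ x) :
    ∀ᵐ x ∂addConv μ ν, 0 ≤ x := by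
  rw [addConv, ae_map_iff measurable_add.aemeasurable measurableSet_Ici]
  filter_upwards [Measure.quasiMeasurePreserving_fst.ae hμ,
    Measure.quasiMeasurePreserving_snd.ae hν] with p hp₁ hp₂
  exact add_nonneg hp₁ hp₂

lemma integral_addConv_of_map_add_eq_mul [SFinite μ] [SFinite ν] {f : ℝ → ℝ}
    (hf : Measurable f) (hadd : ∀ x y, f (x + y) = f x * f y) :
    ∫ x, f x ∂addConv μ ν = (∫ x, f x ∂μ) * ∫ x, f x ∂ν := by
  rw [addConv, integral_map measurable_add.aemeasurable hf.aestronglyMeasurable]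
  simp only [hadd]
  exact integral_prod_mul f f

end Convolution

section DistributionFunction

variable {σ : Measure ℝ} {t : ℝ}

lemma omegaTilde_Iic [SFinite σ] (hσ : ∀ᵐ x ∂σ, 0 ≤ x) (ht : 0 < t) :
    omegaTilde σ (Iic t) = ∫⁻ x, ENNReal.ofReal (exp (-x / t)) ∂σ := by
  rw [omegaTilde, multConv, Measure.map_apply measurable_mul measurableSet_Iic,
    Measure.prod_apply_symm (measurable_mul measurableSet_Iic)]
  refine lintegral_congr_ae ?_
  filter_upwards [hσ] with x hx
  exact map_inv_expDist_mul_le ht hx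

lemma omegaTilde_real_Iic [SFinite σ] (hσ : ∀ᵐ x ∂σ, 0 ≤ x) (ht : 0 < t) :
    (omegaTilde σ (Iic t)).toReal = ∫ x, exp (-x / t) ∂σ := by
  rw [omegaTilde_Iic hσ ht, integral_eq_lintegral_of_nonneg_ae
    (.of_forall fun x => (exp_pos _).le) (by fun_prop)]

lemma integrable_exp_neg_div [IsFiniteMeasure σ] (hσ : ∀ᵐ x ∂σ, 0 ≤ x) (ht : 0 < t) :
    Integrable (fun x => exp (-x / t)) σ := by
  refine (integrable_const 1).mono' (by fun_prop) ?_
  filter_upwards [hσ] with x hx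
  rw [norm_of_nonneg (exp_pos _).le, exp_le_one_iff, neg_div, neg_nonpos]
  exact div_nonneg hx ht.le

end DistributionFunction

open Topology in
lemma measure_Iic_real_mul_of_forall_gt {ρ ρ₁ ρ₂ : Measure ℝ} [IsProbabilityMeasure ρ]
    [IsProbabilityMeasure ρ₁] [IsProbabilityMeasure ρ₂] {a : ℝ}
    (h : ∀ t > a, (ρ (Iic t)).toReal = (ρ₁ (Iic t)).toReal * (ρ₂ (Iic t)).toReal) :
    (ρ (Iic a)).toReal = (ρ₁ (Iic a)).toReal * (ρ₂ (Iic a)).toReal := by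
  have hcdf : ∀ (κ : Measure ℝ) [IsProbabilityMeasure κ],
      Tendsto (fun t => (κ (Iic t)).toReal) (𝓝[>] a) (𝓝 (κ (Iic a)).toReal) := fun κ _ => by
    have hκ : ⇑(ProbabilityTheory.cdf κ) = fun t => (κ (Iic t)).toReal :=
      funext (ProbabilityTheory.cdf_eq_real κ)
    simpa only [hκ] using
      (((ProbabilityTheory.cdf κ).right_continuous a).mono Ioi_subset_Ici_self).tendsto
  exact tendsto_nhds_unique (hcdf ρ)
    (((hcdf ρ₁).mul (hcdf ρ₂)).congr' (eventually_nhdsWithin_of_forall fun t ht => (h t ht).symm))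

/-- `Ω̃(μ)([0,t]) = ∫ e^{-x/t} dμ(x) = exp(C_μ(-1/t))` for `t > 0`, and `Ω̃` is a
homomorphism from `(P(ℝ₊), ∗)` to `(P(ℝ₊), ∨)`. -/
theorem omegaTilde_formula_and_hom (μ ν : Measure ℝ)
    [IsProbabilityMeasure μ] [IsProbabilityMeasure ν]
    (hμ : μ (Set.Iio 0) = 0) (hν : ν (Set.Iio 0) = 0) :
    (∀ t : ℝ, 0 < t →
      ((omegaTilde μ) (Set.Iic t)).toReal = ∫ x, Real.exp (-x / t) ∂μ ∧
      ((omegaTilde μ) (Set.Iic t)).toReal = Real.exp (Real.log (∫ u, Real.exp ((-1 / t) * u) ∂μ))) ∧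
    (∀ t : ℝ, 0 ≤ t →
      ((omegaTilde (addConv μ ν)) (Set.Iic t)).toReal =
        ((omegaTilde μ) (Set.Iic t)).toReal * ((omegaTilde ν) (Set.Iic t)).toReal) := by
  have hμ' := ae_nonneg_of_measure_Iio_eq_zero hμ
  have hν' := ae_nonneg_of_measure_Iio_eq_zero hν
  have hlaplace (u t : ℝ) : exp ((-1 / t) * u) = exp (-u / t) := by ring_nf
  refine ⟨fun t ht => ⟨omegaTilde_real_Iic hμ' ht, ?_⟩, fun t ht => ?_⟩
  · simp only [hlaplace]
    rw [exp_log (integral_exp_pos (integrable_exp_neg_div hμ' ht)), omegaTilde_real_Iic hμ' ht]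
  · refine measure_Iic_real_mul_of_forall_gt fun s hs => ?_
    have hs₀ : 0 < s := ht.trans_lt hs
    rw [omegaTilde_real_Iic (ae_nonneg_addConv hμ' hν') hs₀, omegaTilde_real_Iic hμ' hs₀,
      omegaTilde_real_Iic hν' hs₀]
    exact integral_addConv_of_map_add_eq_mul (by fun_prop) fun x y => by
      rw [neg_add, add_div, exp_add]
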